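/- SL(2,ℤ) is the amalgamated free product ℤ/4 ∗_{ℤ/2} ℤ/6: the pushout of the two injective group homomorphisms ℤ/2 → ℤ/4 sending 1 ↦ 2 and ℤ/2 → ℤ/6 sending 1 ↦ 3 is isomorphic to SL(2,ℤ), via an isomorphism carrying the image of the generator 1 of ℤ/4 to S and the image of the generator 1 of ℤ/6 to U. -/

import Mathlib

open Matrix

/-- `SL(2,ℤ)`. -/
abbrev SL2Z := Matrix.SpecialLinearGroup (Fin 2) ℤ

/-- The element `S = !![0, -1; 1, 0]` of `SL(2,ℤ)`. -/
def Sgen : SL2Z := ⟨!![0, -1; 1, 0], by norm_num [Matrix.det_fin_two_of]⟩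

/-- The element `U = !![0, -1; 1, 1]` of `SL(2,ℤ)`. -/
def Ugen : SL2Z := ⟨!![0, -1; 1, 1], by norm_num [Matrix.det_fin_two_of]⟩

/-- The homomorphism `ℤ/2 → ℤ/4` sending `1 ↦ 2`. -/
def f24 : ZMod 2 →+ ZMod 4 :=
  ZMod.lift 2 ⟨(Int.castAddHom (ZMod 4)).comp (AddMonoidHom.mulRight 2), by decide⟩

/-- The homomorphism `ℤ/2 → ℤ/6` sending `1 ↦ 3`. -/
def f26 : ZMod 2 →+ ZMod 6 :=
  ZMod.lift 2 ⟨(Int.castAddHom (ZMod 6)).comp (AddMonoidHom.mulRight 3), by decide⟩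

/-- The two vertex groups of the amalgam, `ℤ/4` and `ℤ/6` (written multiplicatively). -/
def Gfam : Bool → Type
  | true => Multiplicative (ZMod 4)
  | false => Multiplicative (ZMod 6)

instance : (b : Bool) → Group (Gfam b)
  | true => inferInstanceAs (Group (Multiplicative (ZMod 4)))
  | false => inferInstanceAs (Group (Multiplicative (ZMod 6)))

/-- The amalgamating homomorphisms `ℤ/2 → ℤ/4` (`1 ↦ 2`) and `ℤ/2 → ℤ/6` (`1 ↦ 3`). -/
def amalg : (b : Bool) → Multiplicative (ZMod 2) →* Gfam b
  | true =>
    show Multiplicative (ZMod 2) →* Multiplicative (ZMod 4) from AddMonoidHom.toMultiplicative f24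
  | false =>
    show Multiplicative (ZMod 2) →* Multiplicative (ZMod 6) from AddMonoidHom.toMultiplicative f26

/-!
`S` and `U` satisfy `S⁴ = U⁶ = 1` and `S² = U³ = -1`, so they define a homomorphism from the
amalgam to `SL(2,ℤ)`; it is onto because `S` and `T = S⁻¹U` generate `SL(2,ℤ)`.

For injectivity, write an element of the amalgam in normal form `c · g₁ ⋯ gₙ`, with `c` in the
image of `ℤ/2` (it maps to `±1`) and letters alternating between `ℤ/4 ∖ ℤ/2` and `ℤ/6 ∖ ℤ/2`,
which map to `±S` and to `±U, ±U²` respectively. On `ℤ²`, the letters `±S` map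
`{xy < 0, x + y ≠ 0}` into `{xy > 0, x ≠ y}`, and `±U, ±U²` map `{xy > 0}` into
`{xy < 0, x + y ≠ 0}`. Ping-pong then sends a well-chosen vector `v` to a vector other than `±v`,
so a nonempty word does not map to `±1`. The one ordering with no such `v` (first letter from
`ℤ/6`, last from `ℤ/4`) is reduced to the opposite one by inverting the word.
-/

open Function Set

namespace Monoid.CoprodI.NeWord

variable {ι : Type*} {G : ι → Type*}

theorem toList_inv [∀ i, Group (G i)] {i j : ι} (w : NeWord G i j) :
    w.inv.toList = (w.toList.map fun l => ⟨l.1, l.2⁻¹⟩).reverse := by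
  induction w with
  | singleton => rfl
  | append w₁ _ w₂ ih₁ ih₂ => simp [inv, toList, ih₁, ih₂]

theorem mapsTo_prod [∀ i, Monoid (G i)] {K α : Type*} [Monoid K] [MulAction K α]
    (F : CoprodI G →* K) {src tgt : ι → Set α} (htgt : ∀ i j, i ≠ j → tgt j ⊆ src i)
    {i j : ι} (w : NeWord G i j)
    (hw : ∀ l ∈ w.toList, MapsTo (F (of l.2) • ·) (src l.1) (tgt l.1)) :
    MapsTo (F w.prod • ·) (src j) (tgt i) := by
  induction w with
  | singleton x _ => simpa [toList] using hw
  | append w₁ hne w₂ ih₁ ih₂ =>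
    simp only [toList, List.mem_append] at hw
    have h₁ := ih₁ fun l hl => hw l (.inl hl)
    have h₂ := ih₂ fun l hl => hw l (.inr hl)
    rw [append_prod, map_mul]
    simp_rw [mul_smul]
    exact h₁.comp (h₂.mono_right (htgt _ _ hne))

end Monoid.CoprodI.NeWord

namespace Monoid.PushoutI

variable {ι : Type*} {G : ι → Type*} {H : Type*} [∀ i, Group (G i)] [Group H]
  {φ : ∀ i, H →* G i}

theorem NormalWord.reduced {d : Transversal φ} (w : NormalWord d) : Reduced φ w.toWord := by
  rintro ⟨i, g⟩ hg hrange
  refine w.ne_one _ hg ?_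
  have h₁ := (d.compl i).equiv_snd_eq_self_of_mem_of_one_mem (one_mem _)
    (w.normalized i _ hg)
  have h₂ := (d.compl i).equiv_snd_eq_one_of_mem_of_one_mem (d.one_mem i) hrange
  exact congrArg Subtype.val (h₁.symm.trans h₂)

theorem Reduced.neWord_inv {i j : ι} {w : CoprodI.NeWord G i j} (hw : Reduced φ w.toWord) :
    Reduced φ w.inv.toWord := by
  intro l hl
  obtain ⟨l', hl', rfl⟩ : ∃ l' ∈ w.toList, ⟨l'.1, l'.2⁻¹⟩ = l := by
    simpa [CoprodI.NeWord.toWord, CoprodI.NeWord.toList_inv] using hl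
  simpa using hw l' hl'

theorem injective_of_reduced_neWord {K : Type*} [Group K] (hφ : ∀ i, Injective (φ i))
    (f : PushoutI φ →* K) (hbase : Injective (f.comp (base φ)))
    (hword : ∀ {i j} (w : CoprodI.NeWord G i j), Reduced φ w.toWord →
      f (ofCoprodI w.prod) ∉ (f.comp (base φ)).range) :
    Injective f := by
  classical
  obtain ⟨d⟩ := NormalWord.transversal_nonempty φ hφ
  refine (injective_iff_map_eq_one f).2 fun g hg => ?_
  set w : NormalWord d := g • NormalWord.empty
  have hgw : g = w.prod := by simp [w]
  rw [hgw, NormalWord.prod, map_mul, mul_eq_one_iff_eq_inv] at hg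
  by_cases hw : w.toWord = .empty
  · rw [hw, CoprodI.Word.prod_empty, map_one, map_one, inv_one] at hg
    have : w.head = 1 := hbase (by simpa using hg)
    rw [hgw, NormalWord.prod, hw, this]; simp
  · obtain ⟨i, j, w', hw'⟩ := CoprodI.NeWord.of_word _ hw
    refine absurd ⟨w.head⁻¹, ?_⟩ (hword w' (hw' ▸ w.reduced))
    simp [CoprodI.NeWord.prod, hw', hg]

end Monoid.PushoutI

def ZMod.powHom {G : Type*} [Monoid G] (n : ℕ) [NeZero n] (g : G) (hg : g ^ n = 1) :
    Multiplicative (ZMod n) →* G where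
  toFun x := g ^ x.toAdd.val
  map_one' := by simp
  map_mul' x y := by rw [toAdd_mul, ZMod.val_add, ← pow_eq_pow_mod _ hg, pow_add]

namespace SL2Z

instance : (b : Bool) → Fintype (Gfam b)
  | true => inferInstanceAs (Fintype (Multiplicative (ZMod 4)))
  | false => inferInstanceAs (Fintype (Multiplicative (ZMod 6)))

instance : (b : Bool) → DecidableEq (Gfam b)
  | true => inferInstanceAs (DecidableEq (Multiplicative (ZMod 4)))
  | false => inferInstanceAs (DecidableEq (Multiplicative (ZMod 6)))

theorem amalg_injective : ∀ b, Injective (amalg b)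
  | true | false => by decide

def vertexHom : ∀ b, Gfam b →* SL2Z
  | true => ZMod.powHom 4 Sgen (by decide)
  | false => ZMod.powHom 6 Ugen (by decide)

def baseHom : Multiplicative (ZMod 2) →* SL2Z := ZMod.powHom 2 (-1) (by decide)

theorem vertexHom_comp_amalg : ∀ b, (vertexHom b).comp (amalg b) = baseHom
  | true | false => MonoidHom.ext (by decide)

theorem vertexHom_true_of_notMem_range :
    ∀ x ∉ (amalg true).range, vertexHom true x = Sgen ∨ vertexHom true x = -Sgen := by
  decide

theorem vertexHom_false_of_notMem_range : ∀ x ∉ (amalg false).range,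
    vertexHom false x = Ugen ∨ vertexHom false x = Ugen ^ 2 ∨
      vertexHom false x = -Ugen ∨ vertexHom false x = -Ugen ^ 2 := by
  decide

theorem neg_smul_eq (g : SL2Z) (v : Fin 2 → ℤ) : (-g) • v = -(g • v) := by
  simp [Matrix.SpecialLinearGroup.smul_def]

theorem Sgen_smul (v : Fin 2 → ℤ) : Sgen • v = ![-v 1, v 0] := by
  change (!![0, -1; 1, 0] : Matrix (Fin 2) (Fin 2) ℤ) *ᵥ v = _
  ext k; fin_cases k <;> simp [vecHead, vecTail]

theorem Ugen_smul (v : Fin 2 → ℤ) : Ugen • v = ![-v 1, v 0 + v 1] := by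
  change (!![0, -1; 1, 1] : Matrix (Fin 2) (Fin 2) ℤ) *ᵥ v = _
  ext k; fin_cases k <;> simp [vecHead, vecTail]

theorem Ugen_sq_smul (v : Fin 2 → ℤ) : (Ugen ^ 2) • v = ![-(v 0 + v 1), v 0] := by
  rw [pow_two, mul_smul, Ugen_smul, Ugen_smul]
  ext k; fin_cases k <;> simp

def pingSource : Bool → Set (Fin 2 → ℤ)
  | true => {v | v 0 * v 1 < 0 ∧ v 0 + v 1 ≠ 0}
  | false => {v | 0 < v 0 * v 1}

def pingTarget : Bool → Set (Fin 2 → ℤ)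
  | true => {v | 0 < v 0 * v 1 ∧ v 0 ≠ v 1}
  | false => pingSource true

theorem pingTarget_subset_pingSource : ∀ i j, i ≠ j → pingTarget j ⊆ pingSource i
  | true, false, _ => subset_rfl
  | false, true, _ => fun _ hv => hv.1
  | true, true, h | false, false, h => absurd rfl h

theorem mapsTo_vertexHom : ∀ b (x : Gfam b), x ∉ (amalg b).range →
    MapsTo (vertexHom b x • ·) (pingSource b) (pingTarget b)
  | true, x, hx => by
    intro v ⟨hneg, hsum⟩
    rcases vertexHom_true_of_notMem_range x hx with h | h <;>
    · simp only [pingTarget, h, neg_smul_eq, Sgen_smul, mem_ofPred_eq, Pi.neg_apply,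
        Matrix.cons_val_zero, Matrix.cons_val_one]
      constructor <;> [nlinarith; omega]
  | false, x, hx => by
    intro v (hpos : 0 < v 0 * v 1)
    obtain ⟨h0, h1⟩ : v 0 ≠ 0 ∧ v 1 ≠ 0 := mul_ne_zero_iff.1 hpos.ne'
    rcases vertexHom_false_of_notMem_range x hx with h | h | h | h <;>
    · simp only [pingTarget, pingSource, h, neg_smul_eq, Ugen_smul, Ugen_sq_smul, mem_ofPred_eq,
        Pi.neg_apply, Matrix.cons_val_zero, Matrix.cons_val_one]
      constructor
      · nlinarith [sq_nonneg (v 0), sq_nonneg (v 1)]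
      · omega

theorem exists_mem_pingSource_smul_notMem_pingTarget :
    ∀ i j, ¬(i = false ∧ j = true) →
      ∃ v ∈ pingSource j, ∀ ε : SL2Z, (ε = 1 ∨ ε = -1) → ε • v ∉ pingTarget i
  | true, true, _ => ⟨![1, -2], by simp [pingSource], by
      rintro ε (rfl | rfl) <;> simp [pingTarget, neg_smul_eq]⟩
  | false, false, _ => ⟨![1, 1], by simp [pingSource], by
      rintro ε (rfl | rfl) <;> simp [pingTarget, pingSource, neg_smul_eq]⟩
  | true, false, _ => ⟨![1, 1], by simp [pingSource], by
      rintro ε (rfl | rfl) <;> simp [pingTarget, neg_smul_eq]⟩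
  | false, true, h => absurd ⟨rfl, rfl⟩ h

def pushoutHom : Monoid.PushoutI amalg →* SL2Z :=
  Monoid.PushoutI.lift vertexHom baseHom vertexHom_comp_amalg

open Monoid.PushoutI in
theorem mapsTo_pushoutHom_prod {i j : Bool} (w : Monoid.CoprodI.NeWord Gfam i j)
    (hw : Reduced amalg w.toWord) :
    MapsTo (pushoutHom (ofCoprodI w.prod) • ·) (pingSource j) (pingTarget i) := by
  refine w.mapsTo_prod (pushoutHom.comp ofCoprodI) pingTarget_subset_pingSource fun l hl => ?_
  simpa [pushoutHom] using mapsTo_vertexHom l.1 l.2 (hw l hl)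

open Monoid.PushoutI in
theorem pushoutHom_prod_ne_of_not_false_true {i j : Bool} (hij : ¬(i = false ∧ j = true))
    (w : Monoid.CoprodI.NeWord Gfam i j) (hw : Reduced amalg w.toWord) {ε : SL2Z}
    (hε : ε = 1 ∨ ε = -1) : pushoutHom (ofCoprodI w.prod) ≠ ε := by
  obtain ⟨v, hv, hεv⟩ := exists_mem_pingSource_smul_notMem_pingTarget i j hij
  intro h
  exact hεv ε hε (h ▸ mapsTo_pushoutHom_prod w hw hv)

open Monoid.PushoutI in
theorem pushoutHom_prod_ne {i j : Bool} (w : Monoid.CoprodI.NeWord Gfam i j)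
    (hw : Reduced amalg w.toWord) {ε : SL2Z} (hε : ε = 1 ∨ ε = -1) :
    pushoutHom (ofCoprodI w.prod) ≠ ε := by
  by_cases hij : i = false ∧ j = true
  · obtain ⟨rfl, rfl⟩ := hij
    have hε' : ε⁻¹ = 1 ∨ ε⁻¹ = -1 := by rcases hε with rfl | rfl <;> decide
    have := pushoutHom_prod_ne_of_not_false_true (by decide) w.inv hw.neWord_inv hε'
    rwa [Monoid.CoprodI.NeWord.inv_prod, map_inv, map_inv, ne_eq, _root_.inv_inj] at this
  · exact pushoutHom_prod_ne_of_not_false_true hij w hw hε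

theorem baseHom_injective : Injective baseHom := by
  decide

theorem baseHom_eq_one_or_neg_one : ∀ h, baseHom h = 1 ∨ baseHom h = -1 := by
  decide

theorem pushoutHom_comp_base : pushoutHom.comp (Monoid.PushoutI.base amalg) = baseHom :=
  MonoidHom.ext (Monoid.PushoutI.lift_base vertexHom baseHom vertexHom_comp_amalg)

theorem pushoutHom_injective : Injective pushoutHom := by
  refine Monoid.PushoutI.injective_of_reduced_neWord amalg_injective _
    (pushoutHom_comp_base ▸ baseHom_injective) ?_
  rintro i j w hw ⟨h, hh⟩
  rw [pushoutHom_comp_base] at hh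
  exact pushoutHom_prod_ne w hw (baseHom_eq_one_or_neg_one h) hh.symm

theorem pushoutHom_of_true : pushoutHom (Monoid.PushoutI.of (φ := amalg) true
    (Multiplicative.ofAdd (1 : ZMod 4))) = Sgen :=
  (Monoid.PushoutI.lift_of vertexHom baseHom vertexHom_comp_amalg _).trans (by decide)

theorem pushoutHom_of_false : pushoutHom (Monoid.PushoutI.of (φ := amalg) false
    (Multiplicative.ofAdd (1 : ZMod 6))) = Ugen :=
  (Monoid.PushoutI.lift_of vertexHom baseHom vertexHom_comp_amalg _).trans (by decide)

theorem pushoutHom_surjective : Surjective pushoutHom := by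
  rw [← MonoidHom.range_eq_top, eq_top_iff, ← SpecialLinearGroup.SL2Z_generators,
    Subgroup.closure_le]
  rintro _ (rfl | rfl)
  · exact ⟨_, pushoutHom_of_true⟩
  · rw [show ModularGroup.T = Sgen⁻¹ * Ugen by decide]
    exact mul_mem (inv_mem ⟨_, pushoutHom_of_true⟩) ⟨_, pushoutHom_of_false⟩

end SL2Z

theorem SL2Z_amalgam :
    Function.Injective (amalg true) ∧
    Function.Injective (amalg false) ∧
    amalg true (Multiplicative.ofAdd (1 : ZMod 2)) = Multiplicative.ofAdd (2 : ZMod 4) ∧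
    amalg false (Multiplicative.ofAdd (1 : ZMod 2)) = Multiplicative.ofAdd (3 : ZMod 6) ∧
    ∃ e : Monoid.PushoutI amalg ≃* SL2Z,
      e (Monoid.PushoutI.of (φ := amalg) true (Multiplicative.ofAdd (1 : ZMod 4))) = Sgen ∧
      e (Monoid.PushoutI.of (φ := amalg) false (Multiplicative.ofAdd (1 : ZMod 6))) = Ugen :=
  ⟨SL2Z.amalg_injective true, SL2Z.amalg_injective false, rfl, rfl,
    MulEquiv.ofBijective SL2Z.pushoutHom ⟨SL2Z.pushoutHom_injective, SL2Z.pushoutHom_surjective⟩,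
    SL2Z.pushoutHom_of_true, SL2Z.pushoutHom_of_false⟩
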